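/- Let (H,α) be a monoidal Hom-Hopf algebra over a commutative ring k and let (M,μ) be a right-covariant (H,α)-Hom-bimodule with right coaction σ(m)=m_[0]⊗m_[1]. Define P_R:M→M by P_R(m)=m_[0]·S(m_[1]). Then for all h∈H and m∈M: (i) σ(P_R(m))=μ⁻¹(P_R(m))⊗1 (P_R(m) is a right coinvariant); (ii) m = P_R(m_[0])·m_[1]; (iii) P_R(m·h)=ε(h)μ(P_R(m)); (iv) P_R(h·m)=α(h₁)·(μ⁻¹(P_R(m))·S(h₂)). -/

import Mathlib

open TensorProduct

noncomputable def tmul2 {k A B C D E F : Type*} [CommRing k]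
    [AddCommGroup A] [AddCommGroup B] [AddCommGroup C] [AddCommGroup D]
    [AddCommGroup E] [AddCommGroup F]
    [Module k A] [Module k B] [Module k C] [Module k D] [Module k E] [Module k F]
    (f : A →ₗ[k] C →ₗ[k] E) (g : B →ₗ[k] D →ₗ[k] F) :
    (A ⊗[k] B) →ₗ[k] (C ⊗[k] D) →ₗ[k] (E ⊗[k] F) :=
  TensorProduct.curry
    ((TensorProduct.map (TensorProduct.lift f) (TensorProduct.lift g)) ∘ₗ
      (TensorProduct.tensorTensorTensorComm k A B C D).toLinearMap)

/-- A monoidal Hom-Hopf algebra over a commutative ring `k`. -/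
structure MonHomHopf (k H : Type*) [CommRing k] [AddCommGroup H] [Module k H] where
  α : H ≃ₗ[k] H
  mul : H →ₗ[k] H →ₗ[k] H
  one : H
  comul : H →ₗ[k] H ⊗[k] H
  counit : H →ₗ[k] k
  S : H →ₗ[k] H
  alpha_mul : ∀ g h, α (mul g h) = mul (α g) (α h)
  alpha_one : α one = one
  hom_assoc : ∀ g h l, mul (α g) (mul h l) = mul (mul g h) (α l)
  mul_one' : ∀ h, mul h one = α h
  one_mul' : ∀ h, mul one h = α h
  comul_alpha : ∀ h, comul (α h)
    = TensorProduct.map α.toLinearMap α.toLinearMap (comul h)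
  counit_alpha : ∀ h, counit (α h) = counit h
  hom_coassoc : ∀ h,
    (TensorProduct.assoc k H H H) ((TensorProduct.map comul α.symm.toLinearMap) (comul h))
      = (TensorProduct.map α.symm.toLinearMap comul) (comul h)
  counit_comul_left : ∀ h,
    (TensorProduct.lid k H) ((TensorProduct.map counit LinearMap.id) (comul h)) = α.symm h
  counit_comul_right : ∀ h,
    (TensorProduct.rid k H) ((TensorProduct.map LinearMap.id counit) (comul h)) = α.symm h
  comul_mul : ∀ g h, comul (mul g h) = tmul2 mul mul (comul g) (comul h)
  comul_one : comul one = one ⊗ₜ[k] one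
  counit_mul : ∀ g h, counit (mul g h) = counit g * counit h
  counit_one : counit one = 1
  antipode_left : ∀ h,
    (TensorProduct.lift mul) ((TensorProduct.map S LinearMap.id) (comul h)) = counit h • one
  antipode_right : ∀ h,
    (TensorProduct.lift mul) ((TensorProduct.map LinearMap.id S) (comul h)) = counit h • one
  S_alpha : ∀ h, S (α h) = α (S h)

/-- A right-covariant `(H,α)`-Hom-bimodule. -/
structure RightCovBimod {k H : Type*} [CommRing k] [AddCommGroup H] [Module k H]
    (A : MonHomHopf k H) (M : Type*) [AddCommGroup M] [Module k M] where
  μ : M ≃ₗ[k] M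
  lact : H →ₗ[k] M →ₗ[k] M
  ract : M →ₗ[k] H →ₗ[k] M
  lact_assoc : ∀ g h m, lact (A.α g) (lact h m) = lact (A.mul g h) (μ m)
  lact_one : ∀ m, lact A.one m = μ m
  mu_lact : ∀ h m, μ (lact h m) = lact (A.α h) (μ m)
  ract_assoc : ∀ m g h, ract (μ m) (A.mul g h) = ract (ract m g) (A.α h)
  ract_one : ∀ m, ract m A.one = μ m
  mu_ract : ∀ m h, μ (ract m h) = ract (μ m) (A.α h)
  bimod : ∀ h m g, ract (lact h m) (A.α g) = lact (A.α h) (ract m g)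
  sigma : M →ₗ[k] M ⊗[k] H
  sigma_coassoc : ∀ m,
    (TensorProduct.map sigma A.α.symm.toLinearMap) (sigma m)
      = (TensorProduct.assoc k M H H).symm
          ((TensorProduct.map μ.symm.toLinearMap A.comul) (sigma m))
  sigma_counit : ∀ m,
    (TensorProduct.rid k M) ((TensorProduct.map (LinearMap.id : M →ₗ[k] M) A.counit) (sigma m))
      = μ.symm m
  sigma_mu : ∀ m, sigma (μ m) = TensorProduct.map μ.toLinearMap A.α.toLinearMap (sigma m)
  sigma_cov : ∀ h g m,
    sigma (ract (lact h m) (A.α g))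
      = tmul2 lact A.mul (A.comul (A.α h)) (tmul2 ract A.mul (sigma m) (A.comul g))

/-- The projection `P_R(m) = m_[0] · S(m_[1])`. -/
noncomputable def RightCovBimod.PR {k H : Type*} [CommRing k] [AddCommGroup H] [Module k H]
    {A : MonHomHopf k H} {M : Type*} [AddCommGroup M] [Module k M]
    (B : RightCovBimod A M) : M →ₗ[k] M :=
  (TensorProduct.lift (B.ract.compl₂ A.S)) ∘ₗ B.sigma

/-!
As for ordinary Hopf algebras, the antipode is anti-multiplicative and anti-comultiplicative.
Both facts come from convolution: for linear maps from a monoidal Hom-coalgebra to a monoidal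
Hom-algebra, a map with a left and a right convolution inverse has them equal, provided both
inverses commute with the structure maps `α` (this is what makes convolution associative).
We apply this in `Hom(H ⊗ H, H)` to the multiplication and in `Hom(H, H ⊗ H)` to `Δ`.

Covariance gives `σ(m·h) = m_[0]·h₁ ⊗ m_[1]h₂` and `σ(h·m) = h₁·m_[0] ⊗ h₂m_[1]`. With these,
(ii)–(iv) are Sweedler computations with the Hom-associativity of the actions, the antipode
axioms and `S(gh) = S(h)S(g)`; (i) uses in addition `Δ(S h) = S(h₂) ⊗ S(h₁)` and
Hom-coassociativity twice.
-/

@[simp] theorem tmul2_tmul {k A B C D E F : Type*} [CommRing k]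
    [AddCommGroup A] [AddCommGroup B] [AddCommGroup C] [AddCommGroup D]
    [AddCommGroup E] [AddCommGroup F]
    [Module k A] [Module k B] [Module k C] [Module k D] [Module k E] [Module k F]
    (f : A →ₗ[k] C →ₗ[k] E) (g : B →ₗ[k] D →ₗ[k] F) (a : A) (b : B) (c : C) (d : D) :
    tmul2 f g (a ⊗ₜ[k] b) (c ⊗ₜ[k] d) = f a c ⊗ₜ[k] g b d := by
  simp [tmul2]

/-- Both sides send `((a₁ ⊗ a₂) ⊗ a₃) ⊗ ((b₁ ⊗ b₂) ⊗ b₃)` to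
`(a₁ ⊗ b₁) ⊗ ((a₂ ⊗ b₂) ⊗ (a₃ ⊗ b₃))`. -/
theorem TensorProduct.tensorTensorTensorComm_assoc {k M₁ M₂ M₃ N₁ N₂ N₃ : Type*}
    [CommRing k] [AddCommGroup M₁] [AddCommGroup M₂] [AddCommGroup M₃]
    [AddCommGroup N₁] [AddCommGroup N₂] [AddCommGroup N₃]
    [Module k M₁] [Module k M₂] [Module k M₃] [Module k N₁] [Module k N₂] [Module k N₃] :
    (TensorProduct.assoc k (M₁ ⊗[k] N₁) (M₂ ⊗[k] N₂) (M₃ ⊗[k] N₃)).toLinearMap ∘ₗ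
        map (tensorTensorTensorComm k M₁ M₂ N₁ N₂).toLinearMap LinearMap.id ∘ₗ
        (tensorTensorTensorComm k (M₁ ⊗[k] M₂) M₃ (N₁ ⊗[k] N₂) N₃).toLinearMap
      = map LinearMap.id (tensorTensorTensorComm k M₂ M₃ N₂ N₃).toLinearMap ∘ₗ
        (tensorTensorTensorComm k M₁ (M₂ ⊗[k] M₃) N₁ (N₂ ⊗[k] N₃)).toLinearMap ∘ₗ
        map (TensorProduct.assoc k M₁ M₂ M₃).toLinearMap
          (TensorProduct.assoc k N₁ N₂ N₃).toLinearMap := by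
  ext; simp

section HomStructures

variable (k V : Type*) [CommRing k] [AddCommGroup V] [Module k V]

structure MonHomCoalgebra where
  α : V ≃ₗ[k] V
  comul : V →ₗ[k] V ⊗[k] V
  counit : V →ₗ[k] k
  hom_coassoc : ∀ v, TensorProduct.assoc k V V V (map comul α.symm.toLinearMap (comul v))
    = map α.symm.toLinearMap comul (comul v)
  counit_comul_left : ∀ v, TensorProduct.lid k V (map counit LinearMap.id (comul v)) = α.symm v
  counit_comul_right : ∀ v, TensorProduct.rid k V (map LinearMap.id counit (comul v)) = α.symm v

structure MonHomAlgebra where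
  α : V ≃ₗ[k] V
  mul : V →ₗ[k] V →ₗ[k] V
  one : V
  hom_assoc : ∀ x y z, mul (α x) (mul y z) = mul (mul x y) (α z)
  mul_one : ∀ x, mul x one = α x
  one_mul : ∀ x, mul one x = α x

end HomStructures

section

variable {k V W : Type*} [CommRing k] [AddCommGroup V] [Module k V] [AddCommGroup W] [Module k W]

namespace MonHomAlgebra

noncomputable def tensor (A : MonHomAlgebra k V) (B : MonHomAlgebra k W) :
    MonHomAlgebra k (V ⊗[k] W) where
  α := congr A.α B.α
  mul := tmul2 A.mul B.mul
  one := A.one ⊗ₜ B.one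
  hom_assoc x y z := by
    induction x using TensorProduct.induction_on with
    | zero => simp
    | add x x' hx hx' => simp only [map_add, LinearMap.add_apply, hx, hx']
    | tmul a b =>
      induction y using TensorProduct.induction_on with
      | zero => simp
      | add y y' hy hy' => simp only [map_add, LinearMap.add_apply, hy, hy']
      | tmul c d =>
        induction z using TensorProduct.induction_on with
        | zero => simp
        | add z z' hz hz' => simp only [map_add, hz, hz']
        | tmul e f => simp [A.hom_assoc, B.hom_assoc]
  mul_one x := by
    induction x using TensorProduct.induction_on with
    | zero => simp
    | add x x' hx hx' => simp only [map_add, LinearMap.add_apply, hx, hx']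
    | tmul a b => simp [A.mul_one, B.mul_one]
  one_mul x := by
    induction x using TensorProduct.induction_on with
    | zero => simp
    | add x x' hx hx' => simp only [map_add, hx, hx']
    | tmul a b => simp [A.one_mul, B.one_mul]

variable (A : MonHomAlgebra k V) (B : MonHomAlgebra k W)

@[simp] theorem tensor_α : (A.tensor B).α = congr A.α B.α := rfl

@[simp] theorem tensor_mul : (A.tensor B).mul = tmul2 A.mul B.mul := rfl

@[simp] theorem tensor_one : (A.tensor B).one = A.one ⊗ₜ B.one := rfl

end MonHomAlgebra

namespace MonHomCoalgebra

variable (C : MonHomCoalgebra k V) (D : MonHomCoalgebra k W)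

noncomputable def tensorComul : V ⊗[k] W →ₗ[k] (V ⊗[k] W) ⊗[k] (V ⊗[k] W) :=
  (tensorTensorTensorComm k V V W W).toLinearMap ∘ₗ map C.comul D.comul

noncomputable def tensorCounit : V ⊗[k] W →ₗ[k] k :=
  LinearMap.mul' k k ∘ₗ map C.counit D.counit

@[simp] theorem tensorComul_tmul (v : V) (w : W) :
    tensorComul C D (v ⊗ₜ w) = tensorTensorTensorComm k V V W W (C.comul v ⊗ₜ D.comul w) := rfl

@[simp] theorem tensorCounit_tmul (v : V) (w : W) :
    tensorCounit C D (v ⊗ₜ w) = C.counit v * D.counit w := rfl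

theorem tensor_hom_coassoc (x : V ⊗[k] W) :
    TensorProduct.assoc k (V ⊗[k] W) (V ⊗[k] W) (V ⊗[k] W)
        (map (tensorComul C D) (congr C.α D.α).symm.toLinearMap (tensorComul C D x))
      = map (congr C.α D.α).symm.toLinearMap (tensorComul C D) (tensorComul C D x) := by
  induction x using TensorProduct.induction_on with
  | zero => simp
  | add x x' hx hx' => simp only [map_add, hx, hx']
  | tmul v w =>
    have lhs : (TensorProduct.assoc k (V ⊗[k] W) (V ⊗[k] W) (V ⊗[k] W)).toLinearMap ∘ₗ
          map (tensorComul C D) (congr C.α D.α).symm.toLinearMap ∘ₗ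
          (tensorTensorTensorComm k V V W W).toLinearMap
        = (TensorProduct.assoc k (V ⊗[k] W) (V ⊗[k] W) (V ⊗[k] W)).toLinearMap ∘ₗ
          map (tensorTensorTensorComm k V V W W).toLinearMap LinearMap.id ∘ₗ
          (tensorTensorTensorComm k (V ⊗[k] V) V (W ⊗[k] W) W).toLinearMap ∘ₗ
          map (map C.comul C.α.symm.toLinearMap) (map D.comul D.α.symm.toLinearMap) := by
      ext; simp
    have rhs : map (congr C.α D.α).symm.toLinearMap (tensorComul C D) ∘ₗ
          (tensorTensorTensorComm k V V W W).toLinearMap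
        = map LinearMap.id (tensorTensorTensorComm k V V W W).toLinearMap ∘ₗ
          (tensorTensorTensorComm k V (V ⊗[k] V) W (W ⊗[k] W)).toLinearMap ∘ₗ
          map (map C.α.symm.toLinearMap C.comul) (map D.α.symm.toLinearMap D.comul) := by
      ext; simp
    have rearrange := LinearMap.congr_fun
      (TensorProduct.tensorTensorTensorComm_assoc (k := k) (M₁ := V) (M₂ := V) (M₃ := V)
        (N₁ := W) (N₂ := W) (N₃ := W))
      (map C.comul C.α.symm.toLinearMap (C.comul v) ⊗ₜ
        map D.comul D.α.symm.toLinearMap (D.comul w))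
    have lhs := LinearMap.congr_fun lhs (C.comul v ⊗ₜ D.comul w)
    have rhs := LinearMap.congr_fun rhs (C.comul v ⊗ₜ D.comul w)
    simp only [LinearMap.comp_apply, map_tmul, LinearEquiv.coe_coe, C.hom_coassoc,
      D.hom_coassoc] at lhs rhs rearrange
    rw [tensorComul_tmul, lhs, rhs, rearrange]

theorem tensor_counit_comul_left (x : V ⊗[k] W) :
    TensorProduct.lid k (V ⊗[k] W) (map (tensorCounit C D) LinearMap.id (tensorComul C D x))
      = (congr C.α D.α).symm x := by
  induction x using TensorProduct.induction_on with
  | zero => simp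
  | add x x' hx hx' => simp only [map_add, hx, hx']
  | tmul v w =>
    have key : (TensorProduct.lid k (V ⊗[k] W)).toLinearMap ∘ₗ
          map (tensorCounit C D) LinearMap.id ∘ₗ (tensorTensorTensorComm k V V W W).toLinearMap
        = map ((TensorProduct.lid k V).toLinearMap ∘ₗ map C.counit LinearMap.id)
          ((TensorProduct.lid k W).toLinearMap ∘ₗ map D.counit LinearMap.id) := by
      ext; simp [smul_tmul', mul_smul, smul_comm (C.counit _)]
    have key := LinearMap.congr_fun key (C.comul v ⊗ₜ D.comul w)
    simp only [LinearMap.comp_apply, map_tmul, LinearEquiv.coe_coe, C.counit_comul_left,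
      D.counit_comul_left] at key
    simpa using key

theorem tensor_counit_comul_right (x : V ⊗[k] W) :
    TensorProduct.rid k (V ⊗[k] W) (map LinearMap.id (tensorCounit C D) (tensorComul C D x))
      = (congr C.α D.α).symm x := by
  induction x using TensorProduct.induction_on with
  | zero => simp
  | add x x' hx hx' => simp only [map_add, hx, hx']
  | tmul v w =>
    have key : (TensorProduct.rid k (V ⊗[k] W)).toLinearMap ∘ₗ
          map LinearMap.id (tensorCounit C D) ∘ₗ (tensorTensorTensorComm k V V W W).toLinearMap
        = map ((TensorProduct.rid k V).toLinearMap ∘ₗ map LinearMap.id C.counit)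
          ((TensorProduct.rid k W).toLinearMap ∘ₗ map LinearMap.id D.counit) := by
      ext; simp [smul_tmul', mul_smul, smul_comm (C.counit _)]
    have key := LinearMap.congr_fun key (C.comul v ⊗ₜ D.comul w)
    simp only [LinearMap.comp_apply, map_tmul, LinearEquiv.coe_coe, C.counit_comul_right,
      D.counit_comul_right] at key
    simpa using key

@[simps]
noncomputable def tensor : MonHomCoalgebra k (V ⊗[k] W) :=
  ⟨congr C.α D.α, tensorComul C D, tensorCounit C D, tensor_hom_coassoc C D,
    tensor_counit_comul_left C D, tensor_counit_comul_right C D⟩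

end MonHomCoalgebra

section Convolution

variable (C : MonHomCoalgebra k V) (B : MonHomAlgebra k W)

noncomputable def homConvolution (f g : V →ₗ[k] W) : V →ₗ[k] W :=
  lift B.mul ∘ₗ map f g ∘ₗ C.comul

variable {C B}

theorem homConvolution_apply (f g : V →ₗ[k] W) (v : V) :
    homConvolution C B f g v = lift B.mul (map f g (C.comul v)) := rfl

theorem homConvolution_unit_right {f : V →ₗ[k] W}
    (hf : f ∘ₗ C.α.toLinearMap = B.α.toLinearMap ∘ₗ f) :
    homConvolution C B f (C.counit.smulRight B.one) = f := by
  have key : lift B.mul ∘ₗ map f (C.counit.smulRight B.one)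
      = B.α.toLinearMap ∘ₗ f ∘ₗ (TensorProduct.rid k V).toLinearMap ∘ₗ
        map LinearMap.id C.counit := by
    ext; simp [B.mul_one]
  ext v
  have key := LinearMap.congr_fun key (C.comul v)
  simp only [LinearMap.comp_apply, LinearEquiv.coe_coe, C.counit_comul_right] at key
  simpa [homConvolution_apply, key] using (LinearMap.congr_fun hf (C.α.symm v)).symm

theorem homConvolution_unit_left {f : V →ₗ[k] W}
    (hf : f ∘ₗ C.α.toLinearMap = B.α.toLinearMap ∘ₗ f) :
    homConvolution C B (C.counit.smulRight B.one) f = f := by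
  have key : lift B.mul ∘ₗ map (C.counit.smulRight B.one) f
      = B.α.toLinearMap ∘ₗ f ∘ₗ (TensorProduct.lid k V).toLinearMap ∘ₗ
        map C.counit LinearMap.id := by
    ext; simp [B.one_mul]
  ext v
  have key := LinearMap.congr_fun key (C.comul v)
  simp only [LinearMap.comp_apply, LinearEquiv.coe_coe, C.counit_comul_left] at key
  simpa [homConvolution_apply, key] using (LinearMap.congr_fun hf (C.α.symm v)).symm

theorem homConvolution_assoc {f g h : V →ₗ[k] W}
    (hf : f ∘ₗ C.α.toLinearMap = B.α.toLinearMap ∘ₗ f)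
    (hh : h ∘ₗ C.α.toLinearMap = B.α.toLinearMap ∘ₗ h) :
    homConvolution C B f (homConvolution C B g h)
      = homConvolution C B (homConvolution C B f g) h := by
  have key : lift B.mul ∘ₗ map f (lift B.mul ∘ₗ map g h) ∘ₗ map C.α.toLinearMap LinearMap.id ∘ₗ
        (TensorProduct.assoc k V V V).toLinearMap
      = lift B.mul ∘ₗ map (lift B.mul ∘ₗ map f g) (h ∘ₗ C.α.toLinearMap) := by
    have hf (v : V) : f (C.α v) = B.α (f v) := LinearMap.congr_fun hf v
    have hh (v : V) : h (C.α v) = B.α (h v) := LinearMap.congr_fun hh v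
    ext; simp [hf, hh, B.hom_assoc]
  have left : map f (homConvolution C B g h) = map f (lift B.mul ∘ₗ map g h) ∘ₗ
      map C.α.toLinearMap LinearMap.id ∘ₗ map C.α.symm.toLinearMap C.comul := by
    ext; simp [homConvolution]
  have right : map (homConvolution C B f g) h
      = map (lift B.mul ∘ₗ map f g) (h ∘ₗ C.α.toLinearMap) ∘ₗ
        map C.comul C.α.symm.toLinearMap := by
    ext; simp [homConvolution]
  ext v
  have key := LinearMap.congr_fun key (map C.comul C.α.symm.toLinearMap (C.comul v))
  simp only [LinearMap.comp_apply, LinearEquiv.coe_coe, C.hom_coassoc] at key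
  simpa only [homConvolution_apply, left, right, LinearMap.comp_apply, LinearEquiv.coe_coe]
    using key

theorem eq_of_homConvolution_eq_unit {n m p : V →ₗ[k] W}
    (hn : n ∘ₗ C.α.toLinearMap = B.α.toLinearMap ∘ₗ n)
    (hp : p ∘ₗ C.α.toLinearMap = B.α.toLinearMap ∘ₗ p)
    (hnm : homConvolution C B n m = C.counit.smulRight B.one)
    (hmp : homConvolution C B m p = C.counit.smulRight B.one) : n = p :=
  calc n = homConvolution C B n (C.counit.smulRight B.one) := (homConvolution_unit_right hn).symm
    _ = homConvolution C B (homConvolution C B n m) p := by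
      rw [← hmp, homConvolution_assoc hn hp]
    _ = p := by rw [hnm, homConvolution_unit_left hp]

end Convolution

namespace MonHomHopf

variable {H : Type*} [AddCommGroup H] [Module k H] (A : MonHomHopf k H)

@[simps]
def toMonHomCoalgebra : MonHomCoalgebra k H :=
  ⟨A.α, A.comul, A.counit, A.hom_coassoc, A.counit_comul_left, A.counit_comul_right⟩

def toMonHomAlgebra : MonHomAlgebra k H :=
  ⟨A.α, A.mul, A.one, A.hom_assoc, A.mul_one', A.one_mul'⟩

@[simp] theorem toMonHomAlgebra_α : A.toMonHomAlgebra.α = A.α := rfl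

@[simp] theorem toMonHomAlgebra_mul : A.toMonHomAlgebra.mul = A.mul := rfl

@[simp] theorem toMonHomAlgebra_one : A.toMonHomAlgebra.one = A.one := rfl

theorem alpha_symm_one : A.α.symm A.one = A.one := by
  rw [LinearEquiv.symm_apply_eq, A.alpha_one]

theorem alpha_symm_mul (g h : H) :
    A.α.symm (A.mul g h) = A.mul (A.α.symm g) (A.α.symm h) := by
  rw [LinearEquiv.symm_apply_eq, A.alpha_mul, A.α.apply_symm_apply, A.α.apply_symm_apply]

theorem S_alpha_symm (h : H) : A.S (A.α.symm h) = A.α.symm (A.S h) := by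
  rw [LinearEquiv.eq_symm_apply, ← A.S_alpha, A.α.apply_symm_apply]

theorem mul_mul_mul (x y z w : H) :
    A.mul (A.mul x y) (A.mul z w) = A.mul (A.α x) (A.mul (A.α.symm (A.mul y z)) w) := by
  have hzw : A.mul z w = A.α (A.mul (A.α.symm z) (A.α.symm w)) := by
    rw [A.alpha_mul, A.α.apply_symm_apply, A.α.apply_symm_apply]
  rw [hzw, ← A.hom_assoc]
  congr 1
  conv_lhs => rw [← A.α.apply_symm_apply y]
  rw [A.hom_assoc, A.α.apply_symm_apply, A.alpha_symm_mul]

/-- `(S h₁ · S g₁)(g₂ h₂) = ε(g) ε(h) 1` -/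
theorem homConvolution_mul_flip_S_mul :
    homConvolution (A.toMonHomCoalgebra.tensor A.toMonHomCoalgebra) A.toMonHomAlgebra
        (lift (A.mul.flip.compl₂ A.S ∘ₗ A.S)) (lift A.mul)
      = (A.toMonHomCoalgebra.tensor A.toMonHomCoalgebra).counit.smulRight A.one := by
  have step (x : H ⊗[k] H) (c d : H) :
      lift A.mul (map (lift (A.mul.flip.compl₂ A.S ∘ₗ A.S)) (lift A.mul)
          (tensorTensorTensorComm k H H H H (x ⊗ₜ (c ⊗ₜ d))))
        = A.mul (A.α (A.S c)) (A.mul (A.α.symm (lift A.mul (map A.S LinearMap.id x))) d) := by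
    induction x using TensorProduct.induction_on with
    | zero => simp
    | add x x' hx hx' => simp only [add_tmul, map_add, hx, hx', LinearMap.add_apply]
    | tmul a b => simp [mul_mul_mul]
  have step' (a : H) (y : H ⊗[k] H) :
      lift A.mul (map (lift (A.mul.flip.compl₂ A.S ∘ₗ A.S)) (lift A.mul)
          (tensorTensorTensorComm k H H H H (A.comul a ⊗ₜ y)))
        = A.counit a • A.α (lift A.mul (map A.S LinearMap.id y)) := by
    induction y using TensorProduct.induction_on with
    | zero => simp
    | add y y' hy hy' => simp only [tmul_add, map_add, hy, hy', smul_add]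
    | tmul c d => simp [step, A.antipode_left, A.alpha_symm_one, A.one_mul', A.alpha_mul]
  apply TensorProduct.ext'
  intro a b
  simp [homConvolution_apply, step', A.antipode_left, A.alpha_one, smul_smul]

theorem S_mul (g h : H) : A.S (A.mul g h) = A.mul (A.S h) (A.S g) := by
  let C := A.toMonHomCoalgebra.tensor A.toMonHomCoalgebra
  have hn : lift (A.mul.flip.compl₂ A.S ∘ₗ A.S) ∘ₗ C.α.toLinearMap
      = A.toMonHomAlgebra.α.toLinearMap ∘ₗ lift (A.mul.flip.compl₂ A.S ∘ₗ A.S) := by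
    ext; simp [C, A.S_alpha, A.alpha_mul]
  have hp : (A.S ∘ₗ lift A.mul) ∘ₗ C.α.toLinearMap
      = A.toMonHomAlgebra.α.toLinearMap ∘ₗ A.S ∘ₗ lift A.mul := by
    ext; simp [C, A.S_alpha, ← A.alpha_mul]
  have hmp : homConvolution C A.toMonHomAlgebra (lift A.mul) (A.S ∘ₗ lift A.mul)
      = C.counit.smulRight A.one := by
    have key : lift A.mul ∘ₗ map (lift A.mul) (A.S ∘ₗ lift A.mul) ∘ₗ
        (tensorTensorTensorComm k H H H H).toLinearMap
        = lift A.mul ∘ₗ map LinearMap.id A.S ∘ₗ lift (tmul2 A.mul A.mul) := by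
      ext; simp
    apply TensorProduct.ext'
    intro a b
    have key := LinearMap.congr_fun key (A.comul a ⊗ₜ A.comul b)
    simp only [LinearMap.comp_apply, LinearEquiv.coe_coe, lift.tmul, ← A.comul_mul,
      A.antipode_right, A.counit_mul] at key
    simpa [homConvolution_apply, C] using key
  have := eq_of_homConvolution_eq_unit hn hp (homConvolution_mul_flip_S_mul A) hmp
  simpa using (LinearMap.congr_fun this (g ⊗ₜ h)).symm

theorem comul_alpha_symm (h : H) :
    A.comul (A.α.symm h) = map A.α.symm.toLinearMap A.α.symm.toLinearMap (A.comul h) := by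
  conv_rhs => rw [← A.α.apply_symm_apply h, A.comul_alpha, ← LinearMap.comp_apply, ← map_comp]
  simp

/-- `h₁ ⊗ (α h₂)₁ ⊗ (α h₂)₂ = (α h₁)₁ ⊗ (α h₁)₂ ⊗ h₂` -/
theorem map_comul_alpha_comul (w : H) :
    map LinearMap.id (A.comul ∘ₗ A.α.toLinearMap) (A.comul w)
      = TensorProduct.assoc k H H H
          (map (A.comul ∘ₗ A.α.toLinearMap) LinearMap.id (A.comul w)) := by
  have h1 : map A.comul A.α.symm.toLinearMap ∘ₗ map A.α.toLinearMap A.α.toLinearMap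
      = map (A.comul ∘ₗ A.α.toLinearMap) LinearMap.id := by ext; simp
  have h2 : map A.α.symm.toLinearMap A.comul ∘ₗ map A.α.toLinearMap A.α.toLinearMap
      = map LinearMap.id (A.comul ∘ₗ A.α.toLinearMap) := by ext; simp
  have := A.hom_coassoc (A.α w)
  rw [A.comul_alpha, ← LinearMap.comp_apply (map A.comul _), h1,
    ← LinearMap.comp_apply (map _ A.comul), h2] at this
  exact this.symm

/-- `S(w₁) (α w₂)₁ ⊗ (α w₂)₂ = 1 ⊗ α⁻¹ w` -/
theorem antipode_left_comul_assoc (w : H) :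
    map (lift A.mul ∘ₗ map A.S LinearMap.id) LinearMap.id ((TensorProduct.assoc k H H H).symm
      (map LinearMap.id (A.comul ∘ₗ A.α.toLinearMap) (A.comul w)))
      = A.one ⊗ₜ A.α.symm w := by
  have key : map (lift A.mul ∘ₗ map A.S LinearMap.id) LinearMap.id ∘ₗ
      map (A.comul ∘ₗ A.α.toLinearMap) LinearMap.id
      = TensorProduct.mk k H H A.one ∘ₗ (TensorProduct.lid k H).toLinearMap ∘ₗ
        map A.counit LinearMap.id := by
    ext; simp [A.antipode_left, A.counit_alpha, smul_tmul']
  have key := LinearMap.congr_fun key (A.comul w)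
  simp only [LinearMap.comp_apply, LinearEquiv.coe_coe, A.counit_comul_left] at key
  rw [map_comul_alpha_comul, LinearEquiv.symm_apply_apply, key, TensorProduct.mk_apply]

/-- `S((α w₂)₂) ⊗ w₁ S((α w₂)₁) = S(α⁻¹ w) ⊗ 1` -/
theorem antipode_right_comul_assoc (w : H) :
    map A.S (lift A.mul ∘ₗ map LinearMap.id A.S) (TensorProduct.comm k (H ⊗[k] H) H
      ((TensorProduct.assoc k H H H).symm
        (map LinearMap.id (A.comul ∘ₗ A.α.toLinearMap) (A.comul w))))
      = A.S (A.α.symm w) ⊗ₜ A.one := by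
  have key : map A.S (lift A.mul ∘ₗ map LinearMap.id A.S) ∘ₗ
      (TensorProduct.comm k (H ⊗[k] H) H).toLinearMap ∘ₗ
      map (A.comul ∘ₗ A.α.toLinearMap) LinearMap.id
      = (TensorProduct.mk k H H).flip A.one ∘ₗ A.S ∘ₗ (TensorProduct.lid k H).toLinearMap ∘ₗ
        map A.counit LinearMap.id := by
    ext; simp [A.antipode_right, A.counit_alpha, tmul_smul]
  have key := LinearMap.congr_fun key (A.comul w)
  simp only [LinearMap.comp_apply, LinearEquiv.coe_coe, A.counit_comul_left] at key
  rw [map_comul_alpha_comul, LinearEquiv.symm_apply_apply, key, LinearMap.flip_apply,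
    TensorProduct.mk_apply]

/-- `(S h₁₂ ⊗ S h₁₁)(h₂₁ ⊗ h₂₂) = ε(h) 1 ⊗ 1` -/
theorem homConvolution_comm_map_S_comul :
    homConvolution A.toMonHomCoalgebra (A.toMonHomAlgebra.tensor A.toMonHomAlgebra)
        ((TensorProduct.comm k H H).toLinearMap ∘ₗ map A.S A.S ∘ₗ A.comul) A.comul
      = A.counit.smulRight (A.one ⊗ₜ A.one) := by
  -- `Φ ((a ⊗ b) ⊗ (c ⊗ d)) = S b · c ⊗ S a · d`
  let Φ : (H ⊗[k] H) ⊗[k] (H ⊗[k] H) →ₗ[k] H ⊗[k] H :=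
    lift (tmul2 A.mul A.mul) ∘ₗ map ((TensorProduct.comm k H H).toLinearMap ∘ₗ map A.S A.S)
      LinearMap.id
  let F : H ⊗[k] H →ₗ[k] H := lift A.mul ∘ₗ map A.S LinearMap.id
  have step (a : H) (X : H ⊗[k] H) :
      Φ (map LinearMap.id (A.comul ∘ₗ A.α.toLinearMap)
          ((TensorProduct.assoc k H H H).symm (a ⊗ₜ X)))
        = map LinearMap.id (A.mul (A.S a)) (map F LinearMap.id
          ((TensorProduct.assoc k H H H).symm
            (map LinearMap.id (A.comul ∘ₗ A.α.toLinearMap) X))) := by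
    induction X using TensorProduct.induction_on with
    | zero => simp
    | add X X' hX hX' => simp only [tmul_add, map_add, hX, hX']
    | tmul b c =>
      simp only [TensorProduct.assoc_symm_tmul, map_tmul, LinearMap.id_coe, id_eq]
      generalize (A.comul ∘ₗ A.α.toLinearMap) c = Y
      induction Y using TensorProduct.induction_on with
      | zero => simp
      | add Y Y' hY hY' => simp only [tmul_add, map_add, hY, hY']
      | tmul c d => simp [Φ, F]
  have hz (z : H ⊗[k] H) :
      Φ (map LinearMap.id (A.comul ∘ₗ A.α.toLinearMap)
          ((TensorProduct.assoc k H H H).symm (map A.α.symm.toLinearMap A.comul z)))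
        = A.one ⊗ₜ A.α.symm (F z) := by
    induction z using TensorProduct.induction_on with
    | zero => simp
    | add z z' hz hz' => simp only [map_add, hz, hz', tmul_add]
    | tmul a w => simp [step, F, antipode_left_comul_assoc, S_alpha_symm, alpha_symm_mul]
  have hΦ : lift (tmul2 A.mul A.mul) ∘ₗ
      map ((TensorProduct.comm k H H).toLinearMap ∘ₗ map A.S A.S ∘ₗ A.comul) A.comul
      = Φ ∘ₗ map LinearMap.id (A.comul ∘ₗ A.α.toLinearMap) ∘ₗ map A.comul A.α.symm.toLinearMap := by
    ext; simp [Φ]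
  ext h
  have hΦ := LinearMap.congr_fun hΦ (A.comul h)
  have hz := hz (A.comul h)
  rw [← A.hom_coassoc, LinearEquiv.symm_apply_apply,
    show F (A.comul h) = A.counit h • A.one from A.antipode_left h, map_smul,
    A.alpha_symm_one, tmul_smul] at hz
  simp only [homConvolution_apply, MonHomAlgebra.tensor_mul, toMonHomAlgebra_mul,
    toMonHomCoalgebra_comul, LinearMap.smulRight_apply]
  exact hΦ.trans hz

theorem comul_S (h : H) :
    A.comul (A.S h) = TensorProduct.comm k H H (map A.S A.S (A.comul h)) := by
  let B := A.toMonHomAlgebra.tensor A.toMonHomAlgebra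
  let n : H →ₗ[k] H ⊗[k] H := (TensorProduct.comm k H H).toLinearMap ∘ₗ map A.S A.S ∘ₗ A.comul
  have hn : n ∘ₗ A.α.toLinearMap = B.α.toLinearMap ∘ₗ n := by
    have key : (TensorProduct.comm k H H).toLinearMap ∘ₗ map A.S A.S ∘ₗ
        map A.α.toLinearMap A.α.toLinearMap
        = B.α.toLinearMap ∘ₗ (TensorProduct.comm k H H).toLinearMap ∘ₗ map A.S A.S := by
      ext; simp [B, A.S_alpha]
    ext x
    simpa [n, A.comul_alpha] using LinearMap.congr_fun key (A.comul x)
  have hp : (A.comul ∘ₗ A.S) ∘ₗ A.α.toLinearMap = B.α.toLinearMap ∘ₗ A.comul ∘ₗ A.S := by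
    ext x
    simp [B, A.S_alpha, A.comul_alpha]
  have hmp : homConvolution A.toMonHomCoalgebra B A.comul (A.comul ∘ₗ A.S)
      = A.counit.smulRight B.one := by
    have key : lift (tmul2 A.mul A.mul) ∘ₗ map A.comul A.comul = A.comul ∘ₗ lift A.mul := by
      ext; simp [A.comul_mul]
    ext x
    have key := LinearMap.congr_fun key (map LinearMap.id A.S (A.comul x))
    simp only [LinearMap.comp_apply, A.antipode_right, map_smul, A.comul_one] at key
    simpa [homConvolution_apply, B, ← LinearMap.comp_apply (map A.comul A.comul), ← map_comp]
      using key
  exact (LinearMap.congr_fun (eq_of_homConvolution_eq_unit hn hp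
    (homConvolution_comm_map_S_comul A) hmp) h).symm

end MonHomHopf

namespace RightCovBimod

variable {H M : Type*} [AddCommGroup H] [Module k H] [AddCommGroup M] [Module k M]
  {A : MonHomHopf k H} (B : RightCovBimod A M)

theorem mu_symm_ract (m : M) (h : H) :
    B.μ.symm (B.ract m h) = B.ract (B.μ.symm m) (A.α.symm h) := by
  rw [LinearEquiv.symm_apply_eq, B.mu_ract, B.μ.apply_symm_apply, A.α.apply_symm_apply]

theorem mu_symm_lact (h : H) (m : M) :
    B.μ.symm (B.lact h m) = B.lact (A.α.symm h) (B.μ.symm m) := by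
  rw [LinearEquiv.symm_apply_eq, B.mu_lact, B.μ.apply_symm_apply, A.α.apply_symm_apply]

theorem sigma_mu_symm (m : M) :
    B.sigma (B.μ.symm m) = map B.μ.symm.toLinearMap A.α.symm.toLinearMap (B.sigma m) := by
  conv_rhs => rw [← B.μ.apply_symm_apply m, B.sigma_mu, ← LinearMap.comp_apply, ← map_comp]
  simp

theorem sigma_ract (m : M) (h : H) :
    B.sigma (B.ract m h) = tmul2 B.ract A.mul (B.sigma m) (A.comul h) := by
  have key : ((tmul2 B.ract A.mul).compl₁₂ (map B.μ.symm.toLinearMap A.α.symm.toLinearMap)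
      (map A.α.symm.toLinearMap A.α.symm.toLinearMap)).compr₂
        (tmul2 B.lact A.mul (A.one ⊗ₜ A.one))
      = tmul2 B.ract A.mul := by
    ext; simp [B.lact_one, A.one_mul', B.mu_ract, A.alpha_mul]
  have cov := B.sigma_cov A.one (A.α.symm h) (B.μ.symm m)
  rw [B.lact_one, B.μ.apply_symm_apply, A.α.apply_symm_apply, A.alpha_one, A.comul_one,
    B.sigma_mu_symm, A.comul_alpha_symm] at cov
  exact cov.trans (LinearMap.congr_fun₂ key (B.sigma m) (A.comul h))

theorem sigma_lact (h : H) (m : M) :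
    B.sigma (B.lact h m) = tmul2 B.lact A.mul (A.comul h) (B.sigma m) := by
  have key : ((tmul2 B.lact A.mul).compl₂ ((tmul2 B.ract A.mul).flip (A.one ⊗ₜ A.one))).comp
      (map A.α.toLinearMap A.α.toLinearMap)
      = (tmul2 B.lact A.mul).compr₂ (map B.μ.toLinearMap A.α.toLinearMap) := by
    ext; simp [B.ract_one, A.mul_one', B.mu_lact, A.alpha_mul]
  have cov := B.sigma_cov h A.one m
  rw [A.alpha_one, B.ract_one, B.sigma_mu, A.comul_one, A.comul_alpha] at cov
  apply (TensorProduct.congr B.μ A.α).injective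
  exact cov.trans (LinearMap.congr_fun₂ key (A.comul h) (B.sigma m))

theorem ract_ract_mul (u : M) (a g h : H) :
    B.ract (B.ract u a) (A.mul g h) = B.ract (B.ract u (A.α.symm (A.mul a g))) (A.α h) := by
  rw [← B.μ.apply_symm_apply (B.ract u a), B.ract_assoc, B.mu_symm_ract]
  congr 1
  conv_lhs => rw [← A.α.apply_symm_apply g, ← B.ract_assoc, B.μ.apply_symm_apply]
  rw [A.alpha_symm_mul]

theorem ract_lact_mul (a : H) (u : M) (g h : H) :
    B.ract (B.lact a u) (A.mul g h) = B.lact (A.α a) (B.ract (B.μ.symm (B.ract u g)) h) := by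
  rw [← B.μ.apply_symm_apply (B.lact a u), B.ract_assoc, ← B.bimod]
  congr 1
  rw [B.mu_symm_lact, ← A.α.apply_symm_apply g, B.bimod, A.α.apply_symm_apply,
    A.α.apply_symm_apply, B.mu_symm_ract]

theorem PR_apply (m : M) : B.PR m = lift (B.ract.compl₂ A.S) (B.sigma m) := rfl

theorem sigma_PR (m : M) : B.sigma (B.PR m) = B.μ.symm (B.PR m) ⊗ₜ A.one := by
  let G : (M ⊗[k] H) ⊗[k] H →ₗ[k] M ⊗[k] H :=
    lift ((tmul2 B.ract A.mul).compl₂ (A.comul ∘ₗ A.S ∘ₗ A.α.toLinearMap))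
  have hG : B.sigma ∘ₗ lift (B.ract.compl₂ A.S) = G ∘ₗ map B.sigma A.α.symm.toLinearMap := by
    ext; simp [G, sigma_ract]
  have step (u : M) (a : H) (Y : H ⊗[k] H) :
      tmul2 B.ract A.mul (u ⊗ₜ a) (TensorProduct.comm k H H (map A.S A.S Y))
        = map (B.ract u) LinearMap.id (map A.S (lift A.mul ∘ₗ map LinearMap.id A.S)
          (TensorProduct.comm k (H ⊗[k] H) H
            ((TensorProduct.assoc k H H H).symm (a ⊗ₜ Y)))) := by
    induction Y using TensorProduct.induction_on with
    | zero => simp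
    | add Y Y' hY hY' => simp only [map_add, tmul_add, hY, hY']
    | tmul c d => simp
  have step' (u : M) (X : H ⊗[k] H) :
      G ((TensorProduct.assoc k M H H).symm (u ⊗ₜ X))
        = map (B.ract u) LinearMap.id (map A.S (lift A.mul ∘ₗ map LinearMap.id A.S)
          (TensorProduct.comm k (H ⊗[k] H) H ((TensorProduct.assoc k H H H).symm
            (map LinearMap.id (A.comul ∘ₗ A.α.toLinearMap) X)))) := by
    induction X using TensorProduct.induction_on with
    | zero => simp
    | add X X' hX hX' => simp only [map_add, tmul_add, hX, hX']
    | tmul a b => simp [G, A.comul_S, step]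
  have hC (x : M ⊗[k] H) :
      G ((TensorProduct.assoc k M H H).symm (map B.μ.symm.toLinearMap A.comul x))
        = B.μ.symm (lift (B.ract.compl₂ A.S) x) ⊗ₜ A.one := by
    induction x using TensorProduct.induction_on with
    | zero => simp
    | add x x' hx hx' => simp only [map_add, add_tmul, hx, hx']
    | tmul u v =>
      simp [step', A.antipode_right_comul_assoc, B.mu_symm_ract, A.S_alpha_symm]
  rw [PR_apply, ← LinearMap.comp_apply B.sigma, hG, LinearMap.comp_apply, B.sigma_coassoc,
    hC]

theorem lift_ract_PR_sigma (m : M) : lift (B.ract.comp B.PR) (B.sigma m) = m := by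
  let T : (M ⊗[k] H) ⊗[k] H →ₗ[k] M :=
    lift ((B.ract ∘ₗ lift (B.ract.compl₂ A.S)).compl₂ A.α.toLinearMap)
  have hT : lift (B.ract.comp B.PR) = T ∘ₗ map B.sigma A.α.symm.toLinearMap := by
    ext; simp [T, PR_apply]
  have step (u : M) : T ∘ₗ (TensorProduct.assoc k M H H).symm.toLinearMap ∘ₗ
      TensorProduct.mk k M (H ⊗[k] H) (B.μ.symm u)
      = B.ract u ∘ₗ lift A.mul ∘ₗ map A.S LinearMap.id := by
    ext; simp [T, ← B.ract_assoc]
  have hC (x : M ⊗[k] H) :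
      T ((TensorProduct.assoc k M H H).symm (map B.μ.symm.toLinearMap A.comul x))
        = B.μ (TensorProduct.rid k M (map LinearMap.id A.counit x)) := by
    induction x using TensorProduct.induction_on with
    | zero => simp
    | add x x' hx hx' => simp only [map_add, hx, hx']
    | tmul u v =>
      have step := LinearMap.congr_fun (step u) (A.comul v)
      simp only [LinearMap.comp_apply, TensorProduct.mk_apply, LinearEquiv.coe_coe,
        A.antipode_left] at step
      simp [step, B.ract_one]
  rw [hT, LinearMap.comp_apply, B.sigma_coassoc, hC, B.sigma_counit, B.μ.apply_symm_apply]

theorem PR_ract (m : M) (h : H) : B.PR (B.ract m h) = A.counit h • B.μ (B.PR m) := by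
  have step (u : M) (v : H) : lift (B.ract.compl₂ A.S) ∘ₗ tmul2 B.ract A.mul (u ⊗ₜ v)
      = B.ract.flip (A.α (A.S v)) ∘ₗ B.ract u ∘ₗ A.α.symm.toLinearMap ∘ₗ lift A.mul ∘ₗ
        map LinearMap.id A.S := by
    ext; simp [A.S_mul, ract_ract_mul]
  have hx (x : M ⊗[k] H) :
      lift (B.ract.compl₂ A.S) (tmul2 B.ract A.mul x (A.comul h))
        = A.counit h • B.μ (lift (B.ract.compl₂ A.S) x) := by
    induction x using TensorProduct.induction_on with
    | zero => simp
    | add x x' hx hx' => simp only [map_add, LinearMap.add_apply, hx, hx', smul_add]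
    | tmul u v =>
      have step := LinearMap.congr_fun (step u v) (A.comul h)
      simp only [LinearMap.comp_apply, A.antipode_right] at step
      simp [step, A.alpha_symm_one, B.ract_one, B.mu_ract]
  rw [PR_apply, sigma_ract, hx, PR_apply]

theorem PR_lact (h : H) (m : M) :
    B.PR (B.lact h m) = lift ((B.lact.comp A.α.toLinearMap).compl₂
      ((B.ract (B.μ.symm (B.PR m))).comp A.S)) (A.comul h) := by
  have step (a b : H) : lift (B.ract.compl₂ A.S) ∘ₗ tmul2 B.lact A.mul (a ⊗ₜ b)
      = B.lact (A.α a) ∘ₗ B.ract.flip (A.S b) ∘ₗ B.μ.symm.toLinearMap ∘ₗ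
        lift (B.ract.compl₂ A.S) := by
    ext; simp [A.S_mul, ract_lact_mul]
  have key : lift (B.ract.compl₂ A.S) ∘ₗ (tmul2 B.lact A.mul).flip (B.sigma m)
      = lift ((B.lact.comp A.α.toLinearMap).compl₂
          ((B.ract (B.μ.symm (B.PR m))).comp A.S)) := by
    ext a b
    exact LinearMap.congr_fun (step a b) (B.sigma m)
  rw [PR_apply, sigma_lact]
  exact LinearMap.congr_fun key (A.comul h)

end RightCovBimod

end

/-- properties of the projection `P_R(m) = m_[0] · S(m_[1])` on a
right-covariant Hom-bimodule. -/
theorem PR_properties {k H : Type*} [CommRing k] [AddCommGroup H] [Module k H]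
    (A : MonHomHopf k H) {M : Type*} [AddCommGroup M] [Module k M]
    (B : RightCovBimod A M) :
    (∀ m : M, B.sigma (B.PR m) = (B.μ.symm (B.PR m)) ⊗ₜ[k] A.one) ∧
    (∀ m : M, TensorProduct.lift (B.ract.comp B.PR) (B.sigma m) = m) ∧
    (∀ m h, B.PR (B.ract m h) = A.counit h • B.μ (B.PR m)) ∧
    (∀ h m, B.PR (B.lact h m)
      = TensorProduct.lift
          ((B.lact.comp A.α.toLinearMap).compl₂ ((B.ract (B.μ.symm (B.PR m))).comp A.S))
          (A.comul h)) :=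
  ⟨B.sigma_PR, B.lift_ract_PR_sigma, B.PR_ract, B.PR_lact⟩
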